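/- arXiv:1712.00880 — 3 statements merged into one kernel-verified Lean document; each statement's English description precedes it below -/
import Mathlib

section
/- For every complex number z with |z| ≥ 2, the difference between 1/(|z| - |z|⁻¹)² and 1/|z - z⁻¹|² is bounded in absolute value by 5/|z|³. -/
/-!
With `r = ‖z‖`, the triangle inequality puts `‖z - z⁻¹‖` between `r - r⁻¹` and `r + r⁻¹`, so the
difference lies between `0` and `1 / (r - r⁻¹)² - 1 / (r + r⁻¹)² = 4 / (r² - r⁻²)²`, which for
`r ≥ 2` is at most `(1024 / 225) / r⁴ ≤ 5 / r³`.
-/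

section NormedDivisionRing

variable {𝕜 : Type*} [NormedDivisionRing 𝕜]

theorem norm_sub_inv_norm_le_norm_sub_inv (z : 𝕜) : ‖z‖ - ‖z‖⁻¹ ≤ ‖z - z⁻¹‖ := by
  simpa only [norm_inv] using norm_sub_norm_le z z⁻¹

theorem norm_sub_inv_le_norm_add_inv_norm (z : 𝕜) : ‖z - z⁻¹‖ ≤ ‖z‖ + ‖z‖⁻¹ := by
  simpa only [norm_inv] using norm_sub_le z z⁻¹

end NormedDivisionRing

theorem abs_one_div_sq_sub_one_div_sq_le {a b c : ℝ} (ha : 0 < a) (hab : a ≤ b) (hbc : b ≤ c) :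
    |1 / a ^ 2 - 1 / b ^ 2| ≤ 1 / a ^ 2 - 1 / c ^ 2 := by
  have hb : 0 < b := ha.trans_le hab
  have hab' : 1 / b ^ 2 ≤ 1 / a ^ 2 := one_div_le_one_div_of_le (by positivity) (by gcongr)
  have hbc' : 1 / c ^ 2 ≤ 1 / b ^ 2 := one_div_le_one_div_of_le (by positivity) (by gcongr)
  rw [abs_of_nonneg (sub_nonneg.mpr hab')]
  linarith

theorem one_div_sq_sub_inv_sub_one_div_sq_add_inv {r : ℝ} (hr : 1 < r) :
    1 / (r - r⁻¹) ^ 2 - 1 / (r + r⁻¹) ^ 2 = 4 / (r ^ 2 - (r ^ 2)⁻¹) ^ 2 := by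
  have hr0 : r ≠ 0 := by positivity
  have hsub : r ^ 2 - 1 ≠ 0 := by nlinarith
  have hsub4 : r ^ 4 - 1 ≠ 0 := (sub_pos.mpr (one_lt_pow₀ hr (by norm_num))).ne'
  field_simp
  ring

theorem one_div_sq_sub_inv_sub_one_div_sq_add_inv_le {r : ℝ} (hr : 2 ≤ r) :
    1 / (r - r⁻¹) ^ 2 - 1 / (r + r⁻¹) ^ 2 ≤ 5 / r ^ 3 := by
  have hr0 : 0 < r := by linarith
  have hinv : (r ^ 2)⁻¹ ≤ r ^ 2 / 16 := by
    have hr2 : 4 ≤ r ^ 2 := by nlinarith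
    rw [inv_le_iff_one_le_mul₀ (by positivity)]
    nlinarith
  have hlower : 15 / 16 * r ^ 2 ≤ r ^ 2 - (r ^ 2)⁻¹ := by linarith
  rw [one_div_sq_sub_inv_sub_one_div_sq_add_inv (by linarith)]
  calc 4 / (r ^ 2 - (r ^ 2)⁻¹) ^ 2 ≤ 4 / (15 / 16 * r ^ 2) ^ 2 := by gcongr
    _ ≤ 5 / r ^ 3 := by
      rw [div_le_div_iff₀ (by positivity) (by positivity)]
      nlinarith [pow_pos hr0 3]

theorem stmt_0 (z : ℂ) (hz : 2 ≤ ‖z‖) :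
    |1 / (‖z‖ - (‖z‖)⁻¹) ^ 2 - 1 / (‖z - z⁻¹‖) ^ 2|
      ≤ 5 / (‖z‖) ^ 3 := by
  have hpos : 0 < ‖z‖ - ‖z‖⁻¹ := by
    have : ‖z‖⁻¹ ≤ 1 / 2 := by rw [inv_le_comm₀ (by linarith) (by norm_num)]; linarith
    linarith
  calc _ ≤ 1 / (‖z‖ - ‖z‖⁻¹) ^ 2 - 1 / (‖z‖ + ‖z‖⁻¹) ^ 2 :=
        abs_one_div_sq_sub_one_div_sq_le hpos (norm_sub_inv_norm_le_norm_sub_inv z)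
          (norm_sub_inv_le_norm_add_inv_norm z)
    _ ≤ 5 / ‖z‖ ^ 3 := one_div_sq_sub_inv_sub_one_div_sq_add_inv_le hz
end

section
/- Let r₁, r₂ be real numbers, 1 < Δ ≤ V, and for X > 1 set s = log X and h_s(r) = 2·sinh(s(1+ir))/(1+ir) + 2·sinh(s(1−ir))/(1−ir) − 4·sin(sr)/r. Then there is an absolute constant C such that |(1/Δ)∫_V^{V+Δ} h_s(r₁)·h_s(r₂) dX| ≤ C·(V³/Δ)·u(r₁)·u(r₂)·u(|r₁|−|r₂|), where u(r) = (1+|r|)⁻¹. -/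
noncomputable def hTest (s r : ℝ) : ℂ :=
  2 * Complex.sinh (s * (1 + Complex.I * r)) / (1 + Complex.I * r)
    + 2 * Complex.sinh (s * (1 - Complex.I * r)) / (1 - Complex.I * r)
    - 4 * Real.sin (s * r) / r

/-!
Write `g_c(X) = (X ^ c - X ^ (-c)) / c = 2 sinh (c log X) / c`. Then
`h_{log X}(r) = g_{1+ir}(X) + g_{1-ir}(X) - 2 g_{ir}(X)`, so it suffices to bound `∫ g_c g_d` over
the window, for `|Re c|, |Re d| ≤ 1`, by `V³ u(Im c) u(Im d) u(|Im c| - |Im d|)`, `u(t) = (1 + |t|)⁻¹`.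
Since `|g_c'| ≤ 2` on `X ≥ 1`, we have `|g_c(X)| ≤ 2X`, which settles the case where both imaginary
parts are small. If only `Im d` is large, expand `g_d` into `X ^ (±d)` and integrate by parts
against the slowly varying `g_c`: this gains `1 / |d|` twice. If both are large, expand both factors
into the four monomials `X ^ (±c ± d)`; the integral of `X ^ e` is `O(V³ / |e + 1|)`, and
`|Im (±c ± d)| ≥ ||Im c| - |Im d||`.
-/

open Set MeasureTheory intervalIntegral

/-- `X ^ c`, written as `exp (c log X)` so that no positivity side condition is needed. -/
noncomputable def xpow (c : ℂ) (X : ℝ) : ℂ := Complex.exp (c * Real.log X)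

noncomputable def sinhDiv (c : ℂ) (X : ℝ) : ℂ := (xpow c X - xpow (-c) X) / c

lemma norm_xpow (c : ℂ) (X : ℝ) : ‖xpow c X‖ = Real.exp (c.re * Real.log X) := by
  simp [xpow, Complex.norm_exp]

lemma xpow_mul_xpow (a b : ℂ) (X : ℝ) : xpow a X * xpow b X = xpow (a + b) X := by
  rw [xpow, xpow, xpow, ← Complex.exp_add, add_mul]

lemma xpow_one {X : ℝ} (hX : 0 < X) : xpow 1 X = X := by
  rw [xpow, one_mul, ← Complex.ofReal_exp, Real.exp_log hX]

lemma norm_xpow_le {c : ℂ} {X B : ℝ} (n : ℕ) (hc : c.re ≤ n) (hX : 1 ≤ X) (hXB : X ≤ B) :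
    ‖xpow c X‖ ≤ B ^ n := calc
  ‖xpow c X‖ = Real.exp (c.re * Real.log X) := norm_xpow c X
  _ ≤ Real.exp (n * Real.log B) := by
    gcongr
    exact Real.log_nonneg hX
  _ = B ^ n := by rw [Real.exp_nat_mul, Real.exp_log (by linarith)]

lemma hasDerivAt_xpow (c : ℂ) {X : ℝ} (hX : 0 < X) :
    HasDerivAt (xpow c) (c * xpow c X / X) X := by
  have hlog : HasDerivAt (fun Y : ℝ => c * (Real.log Y : ℂ)) (c * (X : ℂ)⁻¹) X :=
    ((Real.hasDerivAt_log hX.ne').ofReal_comp.const_mul c).congr_deriv (by simp)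
  refine hlog.cexp.congr_deriv ?_
  rw [xpow]
  ring

lemma continuousOn_xpow (c : ℂ) : ContinuousOn (xpow c) (Ioi 0) :=
  fun _ hX => (hasDerivAt_xpow c hX).continuousAt.continuousWithinAt

lemma hasDerivAt_xpow_div {c : ℂ} (hc : c ≠ -1) {X : ℝ} (hX : 0 < X) :
    HasDerivAt (fun Y => xpow (c + 1) Y / (c + 1)) (xpow c X) X := by
  have hc1 : c + 1 ≠ 0 := fun h => hc (eq_neg_of_add_eq_zero_left h)
  have hX0 : (X : ℂ) ≠ 0 := by exact_mod_cast hX.ne'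
  refine ((hasDerivAt_xpow (c + 1) hX).div_const (c + 1)).congr_deriv ?_
  rw [← xpow_mul_xpow, xpow_one hX]
  field_simp

lemma sinhDiv_one (c : ℂ) : sinhDiv c 1 = 0 := by
  simp [sinhDiv, xpow]

/-- The factor `c / c` (which is `0` at `c = 0`, like `sinhDiv 0`) makes this the derivative of
`sinhDiv c` for every `c`. -/
noncomputable def sinhDivDeriv (c : ℂ) (X : ℝ) : ℂ := c / c * ((xpow c X + xpow (-c) X) / X)

lemma hasDerivAt_sinhDiv (c : ℂ) {X : ℝ} (hX : 0 < X) :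
    HasDerivAt (sinhDiv c) (sinhDivDeriv c X) X := by
  refine (((hasDerivAt_xpow c hX).sub (hasDerivAt_xpow (-c) hX)).div_const c).congr_deriv ?_
  rw [sinhDivDeriv]
  ring

lemma continuousOn_sinhDiv (c : ℂ) : ContinuousOn (sinhDiv c) (Ioi 0) :=
  fun _ hX => (hasDerivAt_sinhDiv c hX).continuousAt.continuousWithinAt

lemma continuousOn_sinhDivDeriv (c : ℂ) : ContinuousOn (sinhDivDeriv c) (Ioi 0) :=
  continuousOn_const.mul (((continuousOn_xpow c).add (continuousOn_xpow (-c))).div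
    Complex.continuous_ofReal.continuousOn fun _ hX => Complex.ofReal_ne_zero.2 (ne_of_gt hX))

lemma norm_sinhDivDeriv_le {c : ℂ} (hc : |c.re| ≤ 1) {X : ℝ} (hX : 1 ≤ X) :
    ‖sinhDivDeriv c X‖ ≤ 2 := by
  have hX0 : 0 < X := by linarith
  have h1 := norm_xpow_le (c := c) 1 (by simpa using (abs_le.1 hc).2) hX le_rfl
  have h2 := norm_xpow_le (c := -c) 1 (by simp; linarith [(abs_le.1 hc).1]) hX le_rfl
  rw [sinhDivDeriv, norm_mul, norm_div, norm_div, Complex.norm_real, Real.norm_of_nonneg hX0.le]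
  calc ‖c‖ / ‖c‖ * (‖xpow c X + xpow (-c) X‖ / X) ≤ 1 * ((X ^ 1 + X ^ 1) / X) := by
        gcongr
        · exact div_self_le_one _
        · exact (norm_add_le _ _).trans (add_le_add h1 h2)
    _ = 2 := by field_simp; ring

lemma norm_sinhDiv_le {c : ℂ} (hc : |c.re| ≤ 1) {X : ℝ} (hX : 1 ≤ X) :
    ‖sinhDiv c X‖ ≤ 2 * X := by
  have := norm_image_sub_le_of_norm_deriv_le_segment'
    (fun x hx => (hasDerivAt_sinhDiv c (by linarith [hx.1] : (0:ℝ) < x)).hasDerivWithinAt)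
    (fun x hx => norm_sinhDivDeriv_le hc hx.1) X ⟨hX, le_rfl⟩
  rw [sinhDiv_one, sub_zero] at this
  linarith

lemma inv_one_add_abs_anti {s t : ℝ} (h : |s| ≤ |t|) : (1 + |t|)⁻¹ ≤ (1 + |s|)⁻¹ :=
  inv_anti₀ (by positivity) (by linarith)

lemma half_le_inv_one_add_abs {t : ℝ} (ht : |t| ≤ 1) : 1 / 2 ≤ (1 + |t|)⁻¹ := by
  rw [one_div]
  exact inv_anti₀ (by positivity) (by linarith)

lemma inv_norm_le_two_mul_inv {z : ℂ} (hz : 1 ≤ |z.im|) : ‖z‖⁻¹ ≤ 2 * (1 + |z.im|)⁻¹ := by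
  have him : |z.im| ≤ ‖z‖ := Complex.abs_im_le_norm z
  rw [← div_eq_mul_inv, ← inv_div]
  exact inv_anti₀ (by positivity) (by linarith)

lemma mem_window {V D x : ℝ} (hV : 1 ≤ V) (hD : 0 ≤ D) (hDV : D ≤ V)
    (hx : x ∈ uIcc V (V + D)) : 1 ≤ x ∧ x ≤ 2 * V := by
  rw [uIcc_of_le (by linarith)] at hx
  exact ⟨by linarith [hx.1], by linarith [hx.2]⟩

lemma window_subset_Ioi {V D : ℝ} (hV : 1 ≤ V) (hD : 0 ≤ D) (hDV : D ≤ V) :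
    uIcc V (V + D) ⊆ Ioi 0 :=
  fun _ hx => by have := mem_window hV hD hDV hx; simp only [mem_Ioi]; linarith

lemma norm_integral_window_le {V D M : ℝ} {f : ℝ → ℂ} (hV : 1 ≤ V) (hD : 0 ≤ D) (hDV : D ≤ V)
    (hf : ∀ x, 1 ≤ x → x ≤ 2 * V → ‖f x‖ ≤ M) :
    ‖∫ X in V..V + D, f X‖ ≤ M * D := by
  have := norm_integral_le_of_norm_le_const (a := V) (b := V + D) (C := M) (f := f)
    fun x hx => hf x (mem_window hV hD hDV (uIoc_subset_uIcc hx)).1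
      (mem_window hV hD hDV (uIoc_subset_uIcc hx)).2
  rwa [add_sub_cancel_left, abs_of_nonneg hD] at this

lemma norm_integral_xpow_le_div {V D : ℝ} {c : ℂ} (hV : 1 ≤ V) (hD : 0 ≤ D) (hDV : D ≤ V)
    (hc : c.re ≤ 2) (hc1 : c ≠ -1) :
    ‖∫ X in V..V + D, xpow c X‖ ≤ 16 * V ^ 3 / ‖c + 1‖ := by
  have hpos := window_subset_Ioi hV hD hDV
  rw [integral_eq_sub_of_hasDerivAt (fun x hx => hasDerivAt_xpow_div hc1 (hpos hx))
    ((continuousOn_xpow c).mono hpos).intervalIntegrable, ← sub_div, norm_div]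
  have hb : ∀ x ∈ uIcc V (V + D), ‖xpow (c + 1) x‖ ≤ (2 * V) ^ 3 := fun x hx =>
    norm_xpow_le 3 (by simp; linarith) (mem_window hV hD hDV hx).1 (mem_window hV hD hDV hx).2
  gcongr
  calc ‖xpow (c + 1) (V + D) - xpow (c + 1) V‖
      ≤ (2 * V) ^ 3 + (2 * V) ^ 3 := (norm_sub_le _ _).trans
        (add_le_add (hb _ right_mem_uIcc) (hb _ left_mem_uIcc))
    _ = 16 * V ^ 3 := by ring

lemma norm_integral_xpow_le {V D : ℝ} {c : ℂ} (hV : 1 ≤ V) (hD : 0 ≤ D) (hDV : D ≤ V)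
    (hc : c.re ≤ 2) :
    ‖∫ X in V..V + D, xpow c X‖ ≤ 32 * V ^ 3 * (1 + |c.im|)⁻¹ := by
  rcases le_or_gt |c.im| 1 with him | him
  · have hconst := norm_integral_window_le (f := xpow c) hV hD hDV
      fun x h1 h2 => norm_xpow_le 2 (by exact_mod_cast hc) h1 h2
    have hu := half_le_inv_one_add_abs him
    have hV3 : (2 * V) ^ 2 * D ≤ 16 * V ^ 3 * (1 / 2) := by nlinarith
    calc ‖∫ X in V..V + D, xpow c X‖ ≤ 16 * V ^ 3 * (1 / 2) := hconst.trans hV3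
      _ ≤ 32 * V ^ 3 * (1 + |c.im|)⁻¹ := by nlinarith [pow_pos (by linarith : (0:ℝ) < V) 3]
  · have hc1 : c ≠ -1 := by rintro rfl; norm_num at him
    have hinv := inv_norm_le_two_mul_inv (z := c + 1) (by simpa using him.le)
    simp only [Complex.add_im, Complex.one_im, add_zero] at hinv
    calc ‖∫ X in V..V + D, xpow c X‖ ≤ 16 * V ^ 3 / ‖c + 1‖ :=
          norm_integral_xpow_le_div hV hD hDV hc hc1
      _ ≤ 16 * V ^ 3 * (2 * (1 + |c.im|)⁻¹) := by
          rw [div_eq_mul_inv]; gcongr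
      _ = 32 * V ^ 3 * (1 + |c.im|)⁻¹ := by ring

lemma norm_integral_mul_xpow_le {V D A : ℝ} {f f' : ℝ → ℂ} {e : ℂ}
    (hV : 1 ≤ V) (hD : 0 ≤ D) (hDV : D ≤ V)
    (hf : ∀ x ∈ uIcc V (V + D), HasDerivAt f (f' x) x)
    (hf' : IntervalIntegrable f' volume V (V + D))
    (hfA : ∀ x, 1 ≤ x → x ≤ 2 * V → ‖f x‖ ≤ A * x)
    (hf'A : ∀ x, 1 ≤ x → x ≤ 2 * V → ‖f' x‖ ≤ A)
    (he : e.re ≤ 1) (he1 : e ≠ -1) :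
    ‖∫ X in V..V + D, f X * xpow e X‖ ≤ 20 * A * V ^ 3 / ‖e + 1‖ := by
  have hpos := window_subset_Ioi hV hD hDV
  have hA : 0 ≤ A := (norm_nonneg _).trans (hf'A V hV (by linarith))
  set v := fun Y => xpow (e + 1) Y / (e + 1)
  set M := 4 * V ^ 2 / ‖e + 1‖
  have hv : ∀ x, 1 ≤ x → x ≤ 2 * V → ‖v x‖ ≤ M := fun x h1 h2 => by
    simp only [v, M, norm_div, show 4 * V ^ 2 = (2 * V) ^ 2 by ring]
    gcongr
    exact norm_xpow_le 2 (by simp; linarith) h1 h2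
  have hfv : ∀ x, 1 ≤ x → x ≤ 2 * V → ‖f x * v x‖ ≤ 2 * A * V * M := fun x h1 h2 => by
    rw [norm_mul]
    exact mul_le_mul ((hfA x h1 h2).trans (by nlinarith)) (hv x h1 h2) (norm_nonneg _)
      (by positivity)
  have hM : 0 ≤ M := by positivity
  rw [integral_mul_deriv_eq_deriv_mul hf (fun x hx => hasDerivAt_xpow_div he1 (hpos hx)) hf'
    ((continuousOn_xpow e).mono hpos).intervalIntegrable]
  have hrest := norm_integral_window_le (f := fun x => f' x * v x) hV hD hDV
    fun x h1 h2 => by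
      rw [norm_mul]
      exact mul_le_mul (hf'A x h1 h2) (hv x h1 h2) (norm_nonneg _) hA
  calc ‖f (V + D) * v (V + D) - f V * v V - ∫ x in V..V + D, f' x * v x‖
      ≤ 2 * A * V * M + 2 * A * V * M + A * M * D :=
        (norm_sub_le _ _).trans (add_le_add ((norm_sub_le _ _).trans (add_le_add
          (hfv _ (by linarith) (by linarith)) (hfv _ hV (by linarith)))) hrest)
    _ ≤ 5 * A * V * M := by nlinarith [mul_nonneg hA hM]
    _ = 20 * A * V ^ 3 / ‖e + 1‖ := by ring

lemma norm_integral_sinhDiv_mul_xpow_le {V D : ℝ} {c e : ℂ}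
    (hV : 1 ≤ V) (hD : 0 ≤ D) (hDV : D ≤ V) (hc : |c.re| ≤ 1) (he : e.re ≤ 1)
    (heim : 1 ≤ |e.im|) :
    ‖∫ X in V..V + D, sinhDiv c X * xpow e X‖ ≤ 80 * V ^ 3 * (1 + |e.im|)⁻¹ := by
  have hpos := window_subset_Ioi hV hD hDV
  have he1 : 1 ≤ |(e + 1).im| := by simpa using heim
  have he0 : e ≠ -1 := by rintro rfl; norm_num at heim
  have hinv := inv_norm_le_two_mul_inv he1
  simp only [Complex.add_im, Complex.one_im, add_zero] at hinv
  refine (norm_integral_mul_xpow_le hV hD hDV (fun x hx => hasDerivAt_sinhDiv c (hpos hx))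
    ((continuousOn_sinhDivDeriv c).mono hpos).intervalIntegrable
    (fun x h1 _ => norm_sinhDiv_le hc h1) (fun x h1 _ => norm_sinhDivDeriv_le hc h1)
    he he0).trans ?_
  calc 20 * 2 * V ^ 3 / ‖e + 1‖ = 40 * V ^ 3 * ‖e + 1‖⁻¹ := by ring
    _ ≤ 40 * V ^ 3 * (2 * (1 + |e.im|)⁻¹) := by gcongr
    _ = 80 * V ^ 3 * (1 + |e.im|)⁻¹ := by ring

lemma norm_integral_mul_sinhDiv_le {V D B : ℝ} {f : ℝ → ℂ} {d : ℂ}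
    (hV : 1 ≤ V) (hD : 0 ≤ D) (hDV : D ≤ V) (hf : ContinuousOn f (Ioi 0))
    (h₁ : ‖∫ X in V..V + D, f X * xpow d X‖ ≤ B) (h₂ : ‖∫ X in V..V + D, f X * xpow (-d) X‖ ≤ B) :
    ‖∫ X in V..V + D, f X * sinhDiv d X‖ ≤ 2 * B / ‖d‖ := by
  have hpos := window_subset_Ioi hV hD hDV
  have hint : ∀ e, IntervalIntegrable (fun X => f X * xpow e X) volume V (V + D) :=
    fun e => ((hf.mono hpos).mul ((continuousOn_xpow e).mono hpos)).intervalIntegrable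
  simp only [sinhDiv, mul_div_assoc', mul_sub]
  rw [intervalIntegral.integral_div, integral_sub (hint d) (hint (-d)), norm_div]
  gcongr
  linarith [norm_sub_le (∫ X in V..V + D, f X * xpow d X) (∫ X in V..V + D, f X * xpow (-d) X)]

lemma norm_integral_xpow_mul_sinhDiv_le {V D : ℝ} {c e : ℂ}
    (hV : 1 ≤ V) (hD : 0 ≤ D) (hDV : D ≤ V) (hc : |c.re| ≤ 1) (he : |e.re| ≤ 1) :
    ‖∫ X in V..V + D, xpow e X * sinhDiv c X‖ ≤ 64 * V ^ 3 * (1 + |(|e.im| - |c.im|)|)⁻¹ / ‖c‖ := by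
  have hb : ∀ c' : ℂ, |c'.re| ≤ 1 → |c'.im| = |c.im| →
      ‖∫ X in V..V + D, xpow e X * xpow c' X‖ ≤ 32 * V ^ 3 * (1 + |(|e.im| - |c.im|)|)⁻¹ := by
    intro c' hc're hc'im
    simp only [xpow_mul_xpow]
    refine (norm_integral_xpow_le hV hD hDV ?_).trans ?_
    · simp only [Complex.add_re]; linarith [(abs_le.1 hc're).2, (abs_le.1 he).2]
    · refine mul_le_mul_of_nonneg_left (inv_one_add_abs_anti ?_) (by positivity)
      rw [← hc'im, Complex.add_im]
      simpa using abs_abs_sub_abs_le_abs_sub e.im (-c'.im)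
  refine (norm_integral_mul_sinhDiv_le hV hD hDV (continuousOn_xpow e)
    (hb c hc rfl) (hb (-c) (by simpa using hc) (by simp))).trans_eq ?_
  ring

noncomputable def decayWeight (x y : ℝ) : ℝ :=
  (1 + |x|)⁻¹ * (1 + |y|)⁻¹ * (1 + |(|x| - |y|)|)⁻¹

lemma decayWeight_comm (x y : ℝ) : decayWeight x y = decayWeight y x := by
  rw [decayWeight, decayWeight, abs_sub_comm]; ring

lemma decayWeight_congr {x x' y y' : ℝ} (hx : |x| = |x'|) (hy : |y| = |y'|) :
    decayWeight x y = decayWeight x' y' := by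
  rw [decayWeight, decayWeight, hx, hy]

lemma inv_sq_le_four_mul_decayWeight {x y : ℝ} (hx : |x| ≤ 1) :
    (1 + |y|)⁻¹ ^ 2 ≤ 4 * decayWeight x y := by
  have hu := half_le_inv_one_add_abs hx
  have hdiff : 2⁻¹ * (1 + |y|)⁻¹ ≤ (1 + |(|x| - |y|)|)⁻¹ := by
    have : |(|x| - |y|)| ≤ 1 + |y| :=
      abs_le.2 ⟨by linarith [abs_nonneg x], by linarith [abs_nonneg y]⟩
    rw [← mul_inv]
    exact inv_anti₀ (by positivity) (by linarith [abs_nonneg y])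
  have hy : 0 ≤ (1 + |y|)⁻¹ := by positivity
  rw [decayWeight]
  nlinarith [mul_le_mul_of_nonneg_left hdiff hy, mul_le_mul_of_nonneg_right hu
    (mul_nonneg hy (by positivity : 0 ≤ (1 + |(|x| - |y|)|)⁻¹))]

lemma norm_integral_sinhDiv_mul_sinhDiv_le_of_abs_im_le_one {V D : ℝ} {c d : ℂ}
    (hV : 1 ≤ V) (hD : 0 ≤ D) (hDV : D ≤ V) (hc : |c.re| ≤ 1) (hd : |d.re| ≤ 1)
    (hcim : |c.im| ≤ 1) :
    ‖∫ X in V..V + D, sinhDiv c X * sinhDiv d X‖ ≤ 1280 * V ^ 3 * decayWeight c.im d.im := by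
  have hV3 : 0 < V ^ 3 := by positivity
  suffices h : ‖∫ X in V..V + D, sinhDiv c X * sinhDiv d X‖ ≤ 320 * V ^ 3 * (1 + |d.im|)⁻¹ ^ 2 by
    nlinarith [inv_sq_le_four_mul_decayWeight (y := d.im) hcim]
  rcases le_or_gt |d.im| 1 with hdim | hdim
  · have hconst := norm_integral_window_le (f := fun X => sinhDiv c X * sinhDiv d X) hV hD hDV
      fun x h1 h2 => by
        rw [norm_mul]
        exact mul_le_mul ((norm_sinhDiv_le hc h1).trans (by linarith : 2 * x ≤ 4 * V))
          ((norm_sinhDiv_le hd h1).trans (by linarith : 2 * x ≤ 4 * V)) (norm_nonneg _)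
          (by linarith)
    have hu := half_le_inv_one_add_abs hdim
    calc ‖∫ X in V..V + D, sinhDiv c X * sinhDiv d X‖ ≤ 4 * V * (4 * V) * D := hconst
      _ ≤ 320 * V ^ 3 * (1 / 2) ^ 2 := by nlinarith
      _ ≤ 320 * V ^ 3 * (1 + |d.im|)⁻¹ ^ 2 := by gcongr
  · have hibp : ∀ e : ℂ, e.re ≤ 1 → |e.im| = |d.im| →
        ‖∫ X in V..V + D, sinhDiv c X * xpow e X‖ ≤ 80 * V ^ 3 * (1 + |d.im|)⁻¹ :=
      fun e he heim => by
        rw [← heim]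
        exact norm_integral_sinhDiv_mul_xpow_le hV hD hDV hc he (heim ▸ hdim.le)
    have hdinv := inv_norm_le_two_mul_inv hdim.le
    refine (norm_integral_mul_sinhDiv_le hV hD hDV (continuousOn_sinhDiv c)
      (hibp d (abs_le.1 hd).2 rfl) (hibp (-d) (by simp; linarith [(abs_le.1 hd).1])
        (by simp))).trans ?_
    calc 2 * (80 * V ^ 3 * (1 + |d.im|)⁻¹) / ‖d‖
        = 160 * V ^ 3 * (1 + |d.im|)⁻¹ * ‖d‖⁻¹ := by ring
      _ ≤ 160 * V ^ 3 * (1 + |d.im|)⁻¹ * (2 * (1 + |d.im|)⁻¹) := by gcongr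
      _ = 320 * V ^ 3 * (1 + |d.im|)⁻¹ ^ 2 := by ring

lemma norm_integral_sinhDiv_mul_sinhDiv_le_of_one_le_abs_im {V D : ℝ} {c d : ℂ}
    (hV : 1 ≤ V) (hD : 0 ≤ D) (hDV : D ≤ V) (hc : |c.re| ≤ 1) (hd : |d.re| ≤ 1)
    (hcim : 1 ≤ |c.im|) (hdim : 1 ≤ |d.im|) :
    ‖∫ X in V..V + D, sinhDiv c X * sinhDiv d X‖ ≤ 512 * V ^ 3 * decayWeight c.im d.im := by
  set U := (1 + |(|c.im| - |d.im|)|)⁻¹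
  have hb : ∀ e : ℂ, |e.re| ≤ 1 → |e.im| = |d.im| →
      ‖∫ X in V..V + D, sinhDiv c X * xpow e X‖ ≤ 64 * V ^ 3 * U / ‖c‖ := by
    intro e he heim
    simp only [mul_comm (sinhDiv c _)]
    refine (norm_integral_xpow_mul_sinhDiv_le hV hD hDV hc he).trans_eq ?_
    rw [heim, abs_sub_comm]
  have := norm_integral_mul_sinhDiv_le hV hD hDV (continuousOn_sinhDiv c)
    (hb d hd rfl) (hb (-d) (by simpa using hd) (by simp))
  have hcinv := inv_norm_le_two_mul_inv hcim
  have hdinv := inv_norm_le_two_mul_inv hdim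
  calc ‖∫ X in V..V + D, sinhDiv c X * sinhDiv d X‖
      ≤ 2 * (64 * V ^ 3 * U / ‖c‖) / ‖d‖ := this
    _ = 128 * V ^ 3 * U * (‖c‖⁻¹ * ‖d‖⁻¹) := by ring
    _ ≤ 128 * V ^ 3 * U * (2 * (1 + |c.im|)⁻¹ * (2 * (1 + |d.im|)⁻¹)) := by gcongr
    _ = 512 * V ^ 3 * decayWeight c.im d.im := by rw [decayWeight]; ring

lemma norm_integral_sinhDiv_mul_sinhDiv_le {V D : ℝ} {c d : ℂ}
    (hV : 1 ≤ V) (hD : 0 ≤ D) (hDV : D ≤ V) (hc : |c.re| ≤ 1) (hd : |d.re| ≤ 1) :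
    ‖∫ X in V..V + D, sinhDiv c X * sinhDiv d X‖ ≤ 1280 * V ^ 3 * decayWeight c.im d.im := by
  rcases le_or_gt |c.im| 1 with hcim | hcim
  · exact norm_integral_sinhDiv_mul_sinhDiv_le_of_abs_im_le_one hV hD hDV hc hd hcim
  rcases le_or_gt |d.im| 1 with hdim | hdim
  · simp only [mul_comm (sinhDiv c _), decayWeight_comm c.im]
    exact norm_integral_sinhDiv_mul_sinhDiv_le_of_abs_im_le_one hV hD hDV hd hc hdim
  · have h := norm_integral_sinhDiv_mul_sinhDiv_le_of_one_le_abs_im hV hD hDV hc hd hcim.le hdim.le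
    have : 0 ≤ V ^ 3 * decayWeight c.im d.im := by unfold decayWeight; positivity
    linarith

def hTestCoeff : Fin 3 → ℂ := ![1, 1, -2]

def hTestExponent (r : ℝ) : Fin 3 → ℂ := ![1 + Complex.I * r, 1 - Complex.I * r, Complex.I * r]

lemma sum_norm_hTestCoeff : ∑ i, ‖hTestCoeff i‖ = 4 := by
  simp [Fin.sum_univ_three, hTestCoeff]; norm_num

lemma abs_re_hTestExponent_le (r : ℝ) (i : Fin 3) : |(hTestExponent r i).re| ≤ 1 := by
  fin_cases i <;> simp [hTestExponent]

lemma abs_im_hTestExponent (r : ℝ) (i : Fin 3) : |(hTestExponent r i).im| = |r| := by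
  fin_cases i <;> simp [hTestExponent]

lemma sinhDiv_eq_sinh (c : ℂ) (X : ℝ) : sinhDiv c X = 2 * Complex.sinh (c * Real.log X) / c := by
  rw [sinhDiv, xpow, xpow, Complex.sinh]
  ring_nf

lemma hTest_log_eq_sum (r X : ℝ) :
    hTest (Real.log X) r = ∑ i, hTestCoeff i * sinhDiv (hTestExponent r i) X := by
  simp only [Fin.sum_univ_three, hTestCoeff, hTestExponent, Matrix.cons_val_zero,
    Matrix.cons_val_one, Matrix.cons_val_two, Matrix.head_cons, Matrix.tail_cons, sinhDiv_eq_sinh,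
    hTest, one_mul, mul_comm (Real.log X : ℂ)]
  -- at `r = 0` both sides collapse through the junk values `sinhDiv 0 = 0` and `sin 0 / 0 = 0`
  rcases eq_or_ne r 0 with rfl | hr
  · simp
  · have hrC : (r : ℂ) ≠ 0 := Complex.ofReal_ne_zero.2 hr
    rw [show Complex.I * r * Real.log X = (r * Real.log X : ℂ) * Complex.I by ring,
      Complex.sinh_mul_I, Complex.ofReal_sin, Complex.ofReal_mul]
    field_simp
    ring

lemma norm_integral_sum_mul_sum_le {ι κ : Type*} [Fintype ι] [Fintype κ] {V D x y : ℝ}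
    (hV : 1 ≤ V) (hD : 0 ≤ D) (hDV : D ≤ V) (a : ι → ℂ) (b : κ → ℂ) {c : ι → ℂ} {d : κ → ℂ}
    (hc : ∀ i, |(c i).re| ≤ 1) (hd : ∀ j, |(d j).re| ≤ 1)
    (hcim : ∀ i, |(c i).im| = |x|) (hdim : ∀ j, |(d j).im| = |y|) :
    ‖∫ X in V..V + D, (∑ i, a i * sinhDiv (c i) X) * (∑ j, b j * sinhDiv (d j) X)‖
      ≤ (∑ i, ‖a i‖) * (∑ j, ‖b j‖) * (1280 * V ^ 3 * decayWeight x y) := by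
  have hpos := window_subset_Ioi hV hD hDV
  have hcont : ∀ i j, ContinuousOn
      (fun X => a i * b j * (sinhDiv (c i) X * sinhDiv (d j) X)) (uIcc V (V + D)) :=
    fun i j => continuousOn_const.mul
      (((continuousOn_sinhDiv _).mul (continuousOn_sinhDiv _)).mono hpos)
  have hexpand : ∀ X, (∑ i, a i * sinhDiv (c i) X) * (∑ j, b j * sinhDiv (d j) X)
      = ∑ i, ∑ j, a i * b j * (sinhDiv (c i) X * sinhDiv (d j) X) := fun X => by
    simp only [Finset.sum_mul_sum, mul_mul_mul_comm (a _)]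
  rw [Finset.sum_mul_sum]
  simp only [hexpand, Finset.sum_mul]
  rw [integral_finsetSum fun i _ =>
    (continuousOn_finsetSum _ fun j _ => hcont i j).intervalIntegrable]
  simp only [integral_finsetSum fun j _ => (hcont _ j).intervalIntegrable,
    intervalIntegral.integral_const_mul]
  refine (norm_sum_le _ _).trans (Finset.sum_le_sum fun i _ => (norm_sum_le _ _).trans
    (Finset.sum_le_sum fun j _ => ?_))
  rw [norm_mul, norm_mul, ← decayWeight_congr (hcim i) (hdim j)]
  gcongr
  exact norm_integral_sinhDiv_mul_sinhDiv_le hV hD hDV (hc i) (hd j)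

theorem stmt_3 :
    ∃ C : ℝ, 0 < C ∧ ∀ (r1 r2 V D : ℝ), 1 < D → D ≤ V →
      ‖(1 / D : ℂ) * ∫ X in V..(V + D), hTest (Real.log X) r1 * hTest (Real.log X) r2‖
        ≤ C * (V ^ 3 / D) * (1 + |r1|)⁻¹ * (1 + |r2|)⁻¹ * (1 + |(|r1| - |r2|)|)⁻¹ := by
  refine ⟨16 * 1280, by norm_num, fun r1 r2 V D hD hDV => ?_⟩
  have h := norm_integral_sum_mul_sum_le (by linarith) (by linarith) hDV hTestCoeff hTestCoeff
    (abs_re_hTestExponent_le r1) (abs_re_hTestExponent_le r2) (abs_im_hTestExponent r1)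
    (abs_im_hTestExponent r2)
  simp only [← hTest_log_eq_sum, sum_norm_hTestCoeff] at h
  rw [norm_mul, norm_div, norm_one, Complex.norm_real, Real.norm_of_nonneg (by linarith)]
  calc 1 / D * ‖∫ X in V..V + D, hTest (Real.log X) r1 * hTest (Real.log X) r2‖
      ≤ 1 / D * (4 * 4 * (1280 * V ^ 3 * decayWeight r1 r2)) := by gcongr
    _ = _ := by rw [decayWeight]; ring
end

section
/- There is a constant C such that for all Q ≥ 1 and all 0 < η ≤ 1/2, Σ 1/|cos(arg c)| ≤ C·Q²·log(1/η), where the sum is over Gaussian integers c with Q ≤ |c| ≤ 2Q and |cos(arg c)| ≥ η. -/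
/-!
Write `c = a + bi`. Since `|cos (arg c)| = |a| / |c|`, a term of the sum is at most `2Q / |a|`
and only occurs when `ηQ ≤ |a| ≤ 2Q` and `|b| ≤ 2Q`. Summing over the `O(Q)` admissible `b`
and then over `a` leaves `O(Q) · Q · ∑_{ηQ ≤ n ≤ 2Q} 1/n = O(Q² log (2/η))`, by comparing the
harmonic sum with the logarithm.
-/

open Finset Real

lemma Complex.abs_cos_arg {z : ℂ} (hz : z ≠ 0) : |Real.cos (arg z)| = |z.re| / ‖z‖ := by
  rw [cos_arg hz, abs_div, abs_norm]

lemma Complex.one_div_abs_cos_arg {z : ℂ} (hz : z ≠ 0) :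
    1 / |Real.cos (arg z)| = ‖z‖ / |z.re| := by
  rw [abs_cos_arg hz, one_div_div]

lemma Complex.mul_norm_le_abs_re {z : ℂ} {η : ℝ} (hz : z ≠ 0) (h : η ≤ |Real.cos (arg z)|) :
    η * ‖z‖ ≤ |z.re| := by
  rwa [abs_cos_arg hz, le_div_iff₀ (norm_pos_iff.2 hz)] at h

lemma sum_Icc_ceil_floor_inv_le {x y : ℝ} (hx : 0 < x) (hxy : x ≤ y) :
    ∑ n ∈ Icc ⌈x⌉₊ ⌊y⌋₊, (n : ℝ)⁻¹ ≤ 1 + log (y / x) := by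
  have hlog : 0 ≤ log (y / x) := log_nonneg ((one_le_div hx).2 hxy)
  rcases lt_or_ge ⌊y⌋₊ ⌈x⌉₊ with hempty | hle
  · rw [Icc_eq_empty_of_lt hempty, sum_empty]
    linarith
  have hA : 1 ≤ ⌈x⌉₊ := Nat.one_le_ceil_iff.2 hx
  have hsplit : (harmonic (⌈x⌉₊ - 1) : ℝ) + ∑ n ∈ Icc ⌈x⌉₊ ⌊y⌋₊, (n : ℝ)⁻¹ = harmonic ⌊y⌋₊ := by
    simp only [harmonic_eq_sum_Icc, Rat.cast_sum, Rat.cast_inv, Rat.cast_natCast,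
      ← Ico_add_one_right_eq_Icc, Nat.sub_add_cancel hA]
    exact sum_Ico_consecutive _ hA (by omega)
  have hlow : log x ≤ harmonic (⌈x⌉₊ - 1) := by
    have := log_add_one_le_harmonic (⌈x⌉₊ - 1)
    rw [Nat.sub_add_cancel hA] at this
    exact (log_le_log hx (Nat.le_ceil x)).trans this
  have hup : (harmonic ⌊y⌋₊ : ℝ) ≤ 1 + log y :=
    harmonic_floor_le_one_add_log y ((Nat.one_le_floor_iff y).1 (hA.trans hle))
  rw [log_div (by linarith) hx.ne']
  linarith

lemma Int.card_Icc_neg_self (N : ℕ) : #(Icc (-N : ℤ) N) = 2 * N + 1 := by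
  rw [Int.card_Icc]
  omega

lemma sum_Icc_natAbs_le {α : Type*} [AddCommGroup α] [PartialOrder α] [IsOrderedAddMonoid α]
    (f : ℕ → α) (hf : 0 ≤ f 0) (N : ℕ) :
    ∑ a ∈ Icc (-N : ℤ) N, f a.natAbs ≤ 2 • ∑ n ∈ range (N + 1), f n := by
  rw [sum_Icc_of_even_eq_range fun a => by simp only [Int.natAbs_neg]]
  simpa only [Int.natAbs_natCast, Int.natAbs_zero] using sub_le_self _ hf

lemma sum_Icc_int_inv_natAbs_le {x y : ℝ} (hx : 0 < x) (hxy : x ≤ y) :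
    ∑ a ∈ Icc (-⌊y⌋₊ : ℤ) ⌊y⌋₊,
        (if a.natAbs ∈ Icc ⌈x⌉₊ ⌊y⌋₊ then (a.natAbs : ℝ)⁻¹ else 0) ≤ 2 * (1 + log (y / x)) := by
  calc _ ≤ 2 • ∑ n ∈ range (⌊y⌋₊ + 1), (if n ∈ Icc ⌈x⌉₊ ⌊y⌋₊ then (n : ℝ)⁻¹ else 0) :=
        sum_Icc_natAbs_le (fun n => if n ∈ Icc ⌈x⌉₊ ⌊y⌋₊ then (n : ℝ)⁻¹ else 0)
          (by split_ifs <;> simp) _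
    _ = 2 * ∑ n ∈ Icc ⌈x⌉₊ ⌊y⌋₊, (n : ℝ)⁻¹ := by
        rw [sum_ite_mem, two_nsmul, ← two_mul,
          inter_eq_right.2 fun n hn => mem_range_succ_iff.2 (mem_Icc.1 hn).2]
    _ ≤ 2 * (1 + log (y / x)) := by
        gcongr
        exact sum_Icc_ceil_floor_inv_le hx hxy

lemma one_add_log_two_div_le {η : ℝ} (hη : 0 < η) (hη2 : η ≤ 1 / 2) :
    1 + log (2 / η) ≤ 4 * log (1 / η) := by
  have hlog2 : log 2 ≤ log (1 / η) := log_le_log two_pos (by rw [le_div_iff₀ hη]; linarith)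
  rw [div_eq_mul_one_div, log_mul two_ne_zero (by positivity)]
  linarith [log_two_gt_d9]

namespace GaussianInt

lemma finsum_eq_sum_Icc_Icc {M : Type*} [AddCommMonoid M] (f : GaussianInt → M) (N : ℕ)
    (hf : ∀ c, f c ≠ 0 → c.re.natAbs ≤ N ∧ c.im.natAbs ≤ N) :
    ∑ᶠ c, f c = ∑ a ∈ Icc (-N : ℤ) N, ∑ b ∈ Icc (-N : ℤ) N, f ⟨a, b⟩ := by
  let e : ℤ × ℤ ≃ GaussianInt :=
    ⟨fun p => ⟨p.1, p.2⟩, fun c => (c.re, c.im), fun _ => rfl, fun _ => rfl⟩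
  rw [← finsum_comp_equiv e,
    finsum_eq_sum_of_support_subset (s := Icc (-N : ℤ) N ×ˢ Icc (-N : ℤ) N), sum_product]
  · rfl
  intro p hp
  have hre_im : p.1.natAbs ≤ N ∧ p.2.natAbs ≤ N := hf _ hp
  simp only [coe_product, Set.mem_prod, mem_coe, mem_Icc]
  omega

lemma natAbs_re_le_floor {c : GaussianInt} {r : ℝ} (h : ‖(c : ℂ)‖ ≤ r) :
    c.re.natAbs ≤ ⌊r⌋₊ := by
  refine Nat.le_floor ?_
  rw [Nat.cast_natAbs, Int.cast_abs, intCast_re]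
  exact (Complex.abs_re_le_norm _).trans h

lemma natAbs_im_le_floor {c : GaussianInt} {r : ℝ} (h : ‖(c : ℂ)‖ ≤ r) :
    c.im.natAbs ≤ ⌊r⌋₊ := by
  refine Nat.le_floor ?_
  rw [Nat.cast_natAbs, Int.cast_abs, intCast_im]
  exact (Complex.abs_im_le_norm _).trans h

lemma ite_one_div_abs_cos_arg_le {Q η : ℝ} (hQ : 0 < Q) (hη : 0 < η) (c : GaussianInt) :
    (if Q ≤ ‖(c : ℂ)‖ ∧ ‖(c : ℂ)‖ ≤ 2 * Q ∧ η ≤ |Real.cos (Complex.arg c)| then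
        1 / |Real.cos (Complex.arg c)| else 0) ≤
      2 * Q * if c.re.natAbs ∈ Icc ⌈η * Q⌉₊ ⌊2 * Q⌋₊ then (c.re.natAbs : ℝ)⁻¹ else 0 := by
  have habs : (c.re.natAbs : ℝ) = |(c : ℂ).re| := by
    rw [Nat.cast_natAbs, Int.cast_abs, intCast_re]
  split_ifs with h hmem hmem
  · obtain ⟨h1, h2, -⟩ := h
    have hz : (c : ℂ) ≠ 0 := norm_pos_iff.1 (hQ.trans_le h1)
    rw [Complex.one_div_abs_cos_arg hz, habs, ← div_eq_mul_inv]
    gcongr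
  · obtain ⟨h1, h2, h3⟩ := h
    have hz : (c : ℂ) ≠ 0 := norm_pos_iff.1 (hQ.trans_le h1)
    refine absurd (mem_Icc.2 ⟨Nat.ceil_le.2 ?_, natAbs_re_le_floor h2⟩) hmem
    rw [habs]
    exact (mul_le_mul_of_nonneg_left h1 hη.le).trans (Complex.mul_norm_le_abs_re hz h3)
  · positivity
  · simp

end GaussianInt

theorem stmt_12 :
    ∃ C : ℝ, ∀ Q η : ℝ, 1 ≤ Q → 0 < η → η ≤ 1 / 2 →
      (∑ᶠ c : GaussianInt,
          if Q ≤ ‖GaussianInt.toComplex c‖ ∧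
              ‖GaussianInt.toComplex c‖ ≤ 2 * Q ∧
              η ≤ |Real.cos (Complex.arg (GaussianInt.toComplex c))| then
            1 / |Real.cos (Complex.arg (GaussianInt.toComplex c))|
          else 0)
        ≤ C * Q ^ 2 * Real.log (1 / η) := by
  refine ⟨80, fun Q η hQ hη hη2 => ?_⟩
  have hQ0 : 0 < Q := by linarith
  set N := ⌊2 * Q⌋₊
  have hN : (N : ℝ) ≤ 2 * Q := Nat.floor_le (by positivity)
  rw [GaussianInt.finsum_eq_sum_Icc_Icc _ N fun c hc => ?_]
  · calc _ ≤ ∑ a ∈ Icc (-N : ℤ) N, ∑ _b ∈ Icc (-N : ℤ) N, 2 * Q *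
              if a.natAbs ∈ Icc ⌈η * Q⌉₊ N then (a.natAbs : ℝ)⁻¹ else 0 := by
          gcongr with a _ b _
          exact GaussianInt.ite_one_div_abs_cos_arg_le hQ0 hη ⟨a, b⟩
      _ = (2 * N + 1) * (2 * Q) * ∑ a ∈ Icc (-N : ℤ) N,
              if a.natAbs ∈ Icc ⌈η * Q⌉₊ N then (a.natAbs : ℝ)⁻¹ else 0 := by
          simp only [sum_const, Int.card_Icc_neg_self, nsmul_eq_mul, mul_sum, mul_assoc]
          push_cast
          rfl
      _ ≤ 5 * Q * (2 * Q) * (2 * (1 + log (2 * Q / (η * Q)))) := by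
          gcongr
          · linarith
          · exact sum_Icc_int_inv_natAbs_le (mul_pos hη hQ0) (by nlinarith)
      _ = 20 * Q ^ 2 * (1 + log (2 / η)) := by
          rw [mul_div_mul_right _ _ hQ0.ne']
          ring
      _ ≤ 20 * Q ^ 2 * (4 * log (1 / η)) := by
          gcongr
          exact one_add_log_two_div_le hη hη2
      _ = 80 * Q ^ 2 * log (1 / η) := by ring
  · obtain ⟨⟨-, h2, -⟩, -⟩ := ne_eq _ _ ▸ ite_ne_right_iff.1 hc
    exact ⟨GaussianInt.natAbs_re_le_floor h2, GaussianInt.natAbs_im_le_floor h2⟩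
end
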